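/- arXiv:1906.12304 — 3 statements merged into one kernel-verified Lean document; each statement's English description precedes it below -/
import Mathlib

section
/- Suppose Assumption (A3) holds (the graph G_κ is connected for some κ > 0). Then the true system Γ_k(W) = 1 for k = 1,…,K has a unique solution W* = (W*_1,…,W*_K) ∈ (0,∞)^K satisfying the normalization W*_K = 1. -/
open MeasureTheory ProbabilityTheory Real Finset
open scoped ENNReal NNReal

noncomputable section

namespace SelBias

variable {Z : Type*} [MeasurableSpace Z]

/-- Empirical distribution of the `nk` points `X 0, …, X (nk-1)`. -/
def empDist (nk : ℕ) (X : ℕ → Z) : Measure Z :=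
  (nk : ℝ≥0∞)⁻¹ • ∑ i ∈ Finset.range nk, Measure.dirac (X i)

/-- Pooled empirical distribution `P̃_n = ∑_k (n_k/n) P̂_k`. -/
def pooledDist {K : ℕ} (nv : Fin K → ℕ) (X : Fin K → ℕ → Z) : Measure Z :=
  ∑ k : Fin K, ((nv k : ℝ≥0∞) / ((∑ j : Fin K, nv j : ℕ) : ℝ≥0∞)) • empDist (nv k) (X k)

/-- The functional `Γ_k(W)` associated with weights `lam` and measure `μ`. -/
def Gam {K : ℕ} (ω : Fin K → Z → ℝ) (lam : Fin K → ℝ) (μ : Measure Z)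
    (W : Fin K → ℝ) (k : Fin K) : ℝ :=
  (W k)⁻¹ * ∫ z, ω k z / (∑ l : Fin K, lam l / W l * ω l z) ∂μ

/-- `W` is a positive solution of the system `Γ_k(W) = 1`, normalized by `W_K = 1`. -/
def IsSol {K : ℕ} (hK : 0 < K) (ω : Fin K → Z → ℝ) (lam : Fin K → ℝ) (μ : Measure Z)
    (W : Fin K → ℝ) : Prop :=
  (∀ k, 0 < W k) ∧ W ⟨K - 1, Nat.sub_lt hK one_pos⟩ = 1 ∧ ∀ k, Gam ω lam μ W k = 1

/-- The normalizing constants `Ω_k = ∫ ω_k dP`. -/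
def Om {K : ℕ} (ω : Fin K → Z → ℝ) (P : Measure Z) (k : Fin K) : ℝ := ∫ z, ω k z ∂P

/-- The biased distribution `P_k = (ω_k/Ω_k)·P`. -/
def Pk {K : ℕ} (ω : Fin K → Z → ℝ) (P : Measure Z) (k : Fin K) : Measure Z :=
  P.withDensity fun z => ENNReal.ofReal (ω k z / Om ω P k)

/-- The mixture `P̄ = ∑_k λ_k P_k`. -/
def Pbar {K : ℕ} (ω : Fin K → Z → ℝ) (P : Measure Z) (lam : Fin K → ℝ) : Measure Z :=
  ∑ k : Fin K, ENNReal.ofReal (lam k) • Pk ω P k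

/-- The estimated normalizing constants built from a solution `W`. -/
def OmHat {K : ℕ} (ω : Fin K → Z → ℝ) (lamhat : Fin K → ℝ) (μ : Measure Z)
    (W : Fin K → ℝ) (l : Fin K) : ℝ :=
  W l / ∫ z, (∑ k : Fin K, lamhat k * ω k z / W k)⁻¹ ∂μ

/-- The (debiased) risk functional. -/
def risk {K : ℕ} {Θ : Type*} (ω : Fin K → Z → ℝ) (lamhat : Fin K → ℝ) (μ : Measure Z)
    (Ωh : Fin K → ℝ) (ψ : Z → Θ → ℝ) (θ : Θ) : ℝ :=
  ∫ z, (∑ k : Fin K, lamhat k * ω k z / Ωh k)⁻¹ * ψ z θ ∂μ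

/-- The graph `G_κ`: `k ∼ l` iff `∫ ω_k ω_l dP ≥ κ`. -/
def biasGraph {K : ℕ} (ω : Fin K → Z → ℝ) (P : Measure Z) (κ : ℝ) : SimpleGraph (Fin K) where
  Adj k l := k ≠ l ∧ κ ≤ ∫ z, ω k z * ω l z ∂P
  symm := ⟨fun k l h => ⟨h.1.symm, by simpa [mul_comm] using h.2⟩⟩
  loopless := ⟨fun k h => h.1 rfl⟩

/-- Euclidean norm on `ℝ^K`. -/
def eNorm {K : ℕ} (v : Fin K → ℝ) : ℝ := Real.sqrt (∑ k, v k ^ 2)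

/-- The gradient `D'(u)` of the convex criterion, w.r.t. weights `lam` and measure `μ`. -/
def Dp {K : ℕ} (ω : Fin K → Z → ℝ) (lam : Fin K → ℝ) (μ : Measure Z)
    (u : Fin K → ℝ) (l : Fin K) : ℝ :=
  (∫ z, Real.exp (u l) * ω l z / (∑ k : Fin K, Real.exp (u k) * ω k z) ∂μ) - lam l

/-- The Hessian `D''(u)` of the convex criterion w.r.t. measure `μ`. -/
def Hess {K : ℕ} (ω : Fin K → Z → ℝ) (μ : Measure Z) (u : Fin K → ℝ) (l l' : Fin K) : ℝ :=
  ∫ z, ((if l = l' then Real.exp (u l) * ω l z / (∑ k : Fin K, Real.exp (u k) * ω k z) else 0)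
      - Real.exp (u l) * ω l z * (Real.exp (u l') * ω l' z)
        / (∑ k : Fin K, Real.exp (u k) * ω k z) ^ 2) ∂μ


/-! Write `s = ∑ λ_l ω_l / Ω_l` for the density of `P̄` with respect to `P`. The system `Γ(W) = 1`
says `∫ s ω_k / D_W dP = W_k = Ω_k / φ_k`, where `φ_l = Ω_l / W_l` and `D_W = ∑ (λ_l/Ω_l) φ_l ω_l`.
If all `φ_l` equal `Ω_K`, i.e. `W = Ω / Ω_K`, then `D_W = Ω_K s` and the system holds. Conversely, at
an index `k` where `φ` is maximal, `D_W ≤ φ_k s` forces `s ω_k / D_W ≥ ω_k / φ_k`, and the system turns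
this into an a.e. equality; the inequality is strict wherever `ω_k ω_l > 0` with `φ_l < φ_k`, so
`∫ ω_k ω_l dP = 0` for such `l`. Hence the set where `φ` is maximal is closed under the edges of
`G_κ`, and connectivity makes `φ` constant. -/

theorem _root_.SimpleGraph.Connected.eq_of_isMax_of_adj {V α : Type*} [LE α] {G : SimpleGraph V}
    (hG : G.Connected) {f : V → α} {m : V} (hm : ∀ v, f v ≤ f m)
    (hadj : ∀ x y, (∀ v, f v ≤ f x) → G.Adj x y → f y = f x) (v : V) : f v = f m := by
  by_contra hv
  obtain ⟨w⟩ := hG.preconnected m v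
  obtain ⟨d, -, hd₁, hd₂⟩ := w.exists_boundary_dart {u | f u = f m} rfl hv
  have hd₁ : f d.fst = f m := hd₁
  exact hd₂ ((hadj _ _ (hd₁ ▸ hm) d.adj).trans hd₁)

section WeightedSums

variable {ι : Type*} [Fintype ι] {c φ x : ι → ℝ} {ρ : ℝ}

theorem sum_mul_mul_le_mul_sum (hc : ∀ i, 0 ≤ c i) (hx : ∀ i, 0 ≤ x i) (hφ : ∀ i, φ i ≤ ρ) :
    ∑ i, c i * φ i * x i ≤ ρ * ∑ i, c i * x i := by
  rw [Finset.mul_sum]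
  refine Finset.sum_le_sum fun i _ => ?_
  nlinarith [mul_nonneg (hc i) (hx i), hφ i]

theorem sum_mul_mul_lt_mul_sum (hc : ∀ i, 0 < c i) (hx : ∀ i, 0 ≤ x i) (hφ : ∀ i, φ i ≤ ρ)
    {l : ι} (hl : φ l < ρ) (hxl : 0 < x l) :
    ∑ i, c i * φ i * x i < ρ * ∑ i, c i * x i := by
  rw [Finset.mul_sum]
  refine Finset.sum_lt_sum (fun i _ => ?_) ⟨l, Finset.mem_univ l, ?_⟩
  · nlinarith [mul_nonneg (hc i).le (hx i), hφ i]
  · nlinarith [mul_pos (hc l) hxl]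

theorem sum_mul_mul_pos (hc : ∀ i, 0 < c i) (hφ : ∀ i, 0 < φ i) (hx : ∀ i, 0 ≤ x i)
    {k : ι} (hxk : 0 < x k) : 0 < ∑ i, c i * φ i * x i :=
  (mul_pos (mul_pos (hc k) (hφ k)) hxk).trans_le <| Finset.single_le_sum
    (fun i _ => mul_nonneg (mul_pos (hc i) (hφ i)).le (hx i)) (Finset.mem_univ k)

theorem div_le_sum_mul_div (hc : ∀ i, 0 < c i) (hφ : ∀ i, 0 < φ i) (hx : ∀ i, 0 ≤ x i)
    {k : ι} (hmax : ∀ i, φ i ≤ φ k) :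
    x k / φ k ≤ (∑ i, c i * x i) * (x k / ∑ i, c i * φ i * x i) := by
  rcases (hx k).eq_or_lt with hxk | hxk
  · simp [← hxk]
  rw [← mul_div_assoc, div_le_div_iff₀ (hφ k) (sum_mul_mul_pos hc hφ hx hxk)]
  nlinarith [sum_mul_mul_le_mul_sum (hc · |>.le) hx hmax]

theorem div_lt_sum_mul_div (hc : ∀ i, 0 < c i) (hφ : ∀ i, 0 < φ i) (hx : ∀ i, 0 ≤ x i)
    {k l : ι} (hmax : ∀ i, φ i ≤ φ k) (hl : φ l < φ k) (hxk : 0 < x k) (hxl : 0 < x l) :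
    x k / φ k < (∑ i, c i * x i) * (x k / ∑ i, c i * φ i * x i) := by
  rw [← mul_div_assoc, div_lt_div_iff₀ (hφ k) (sum_mul_mul_pos hc hφ hx hxk)]
  nlinarith [sum_mul_mul_lt_mul_sum hc hx hmax hl hxl]

theorem sum_mul_div_le (hc : ∀ i, 0 < c i) (hφ : ∀ i, 0 < φ i) (hx : ∀ i, 0 ≤ x i) (k : ι) :
    (∑ i, c i * x i) * (x k / ∑ i, c i * φ i * x i) ≤ (∑ i, c i * x i) / (c k * φ k) := by
  have hs : 0 ≤ ∑ i, c i * x i := Finset.sum_nonneg fun i _ => mul_nonneg (hc i).le (hx i)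
  rcases (hx k).eq_or_lt with hxk | hxk
  · simp only [← hxk, zero_div, mul_zero]
    exact div_nonneg hs (mul_pos (hc k) (hφ k)).le
  rw [← mul_div_assoc, div_le_div_iff₀ (sum_mul_mul_pos hc hφ hx hxk) (mul_pos (hc k) (hφ k))]
  have hk : c k * φ k * x k ≤ ∑ i, c i * φ i * x i := Finset.single_le_sum
    (fun i _ => mul_nonneg (mul_pos (hc i) (hφ i)).le (hx i)) (Finset.mem_univ k)
  nlinarith

theorem sum_mul_div_sum_mul_const (hc : ∀ i, 0 < c i) (hx : ∀ i, 0 ≤ x i) (hρ : ρ ≠ 0) (k : ι) :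
    (∑ i, c i * x i) * (x k / ∑ i, c i * ρ * x i) = x k / ρ := by
  have hsum : ∑ i, c i * ρ * x i = ρ * ∑ i, c i * x i := by
    rw [Finset.mul_sum]; exact Finset.sum_congr rfl fun i _ => by ring
  rcases (Finset.sum_nonneg fun i _ => mul_nonneg (hc i).le (hx i)).eq_or_lt with hs | hs
  · have hxk : c k * x k = 0 := (Finset.sum_eq_zero_iff_of_nonneg
      fun i _ => mul_nonneg (hc i).le (hx i)).1 hs.symm k (Finset.mem_univ k)
    simp [← hs, (mul_eq_zero.1 hxk).resolve_left (hc k).ne']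
  rw [hsum]
  field_simp

end WeightedSums

section WeightedIntegrals

variable {ι : Type*} [Fintype ι] {μ : Measure Z} {c φ : ι → ℝ} {ω : ι → Z → ℝ}

theorem integrable_sum_mul_div (hc : ∀ i, 0 < c i) (hφ : ∀ i, 0 < φ i)
    (hω : ∀ i z, 0 ≤ ω i z) (hint : ∀ i, Integrable (ω i) μ) (k : ι) :
    Integrable (fun z => (∑ i, c i * ω i z) * (ω k z / ∑ i, c i * φ i * ω i z)) μ := by
  have hs : Integrable (fun z => ∑ i, c i * ω i z) μ :=
    integrable_finsetSum _ fun i _ => (hint i).const_mul _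
  have hmeas : ∀ i, AEMeasurable (ω i) μ := fun i => (hint i).aemeasurable
  refine (hs.div_const (c k * φ k)).mono' (by fun_prop) (ae_of_all _ fun z => ?_)
  rw [Real.norm_of_nonneg (mul_nonneg (Finset.sum_nonneg fun i _ => mul_nonneg (hc i).le
    (hω i z)) (div_nonneg (hω k z) (Finset.sum_nonneg fun i _ =>
      mul_nonneg (mul_pos (hc i) (hφ i)).le (hω i z))))]
  exact sum_mul_div_le hc hφ ((hω · z)) k

theorem eq_of_integral_sum_mul_div_eq (hc : ∀ i, 0 < c i) (hφ : ∀ i, 0 < φ i)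
    (hω : ∀ i z, 0 ≤ ω i z) (hint : ∀ i, Integrable (ω i) μ) {k l : ι}
    (hmax : ∀ i, φ i ≤ φ k)
    (hk : ∫ z, (∑ i, c i * ω i z) * (ω k z / ∑ i, c i * φ i * ω i z) ∂μ = (∫ z, ω k z ∂μ) / φ k)
    (hkl : ∫ z, ω k z * ω l z ∂μ ≠ 0) : φ l = φ k := by
  refine (hmax l).eq_or_lt.resolve_right fun hlt => hkl ?_
  set F : Z → ℝ := fun z => (∑ i, c i * ω i z) * (ω k z / ∑ i, c i * φ i * ω i z) - ω k z / φ k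
  have hF_nonneg : 0 ≤ F := fun z => sub_nonneg.2 (div_le_sum_mul_div hc hφ (hω · z) hmax)
  have hF_int : Integrable F μ := (integrable_sum_mul_div hc hφ hω hint k).sub ((hint k).div_const _)
  have hF_zero : ∫ z, F z ∂μ = 0 := by
    rw [integral_sub (integrable_sum_mul_div hc hφ hω hint k) ((hint k).div_const _), hk,
      integral_div, sub_self]
  refine integral_eq_zero_of_ae <|
    ((integral_eq_zero_iff_of_nonneg hF_nonneg hF_int).1 hF_zero).mono fun z hz => ?_
  by_contra hne
  obtain ⟨hk0, hl0⟩ := mul_ne_zero_iff.1 hne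
  have := div_lt_sum_mul_div hc hφ (hω · z) hmax hlt ((hω k z).lt_of_ne' hk0)
    ((hω l z).lt_of_ne' hl0)
  exact (sub_pos.2 this).ne' hz

end WeightedIntegrals

section Mixture

variable {K : ℕ} {P : Measure Z} {ω : Fin K → Z → ℝ} {lam : Fin K → ℝ}

theorem Pbar_eq_withDensity (hωmeas : ∀ k, Measurable (ω k)) (hωnn : ∀ k z, 0 ≤ ω k z)
    (hlam : ∀ k, 0 ≤ lam k) :
    Pbar ω P lam = P.withDensity fun z => ENNReal.ofReal (∑ l, lam l / Om ω P l * ω l z) := by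
  have hOm : ∀ k, 0 ≤ Om ω P k := fun k => integral_nonneg (hωnn k)
  have hmeas : ∀ k, Measurable fun z => ENNReal.ofReal (ω k z / Om ω P k) :=
    fun k => ((hωmeas k).div_const _).ennreal_ofReal
  simp only [Pbar, Pk, ← withDensity_smul _ (hmeas _), ← Measure.sum_fintype,
    ← withDensity_tsum fun k => (hmeas k).const_smul _]
  congr 1
  funext z
  rw [tsum_fintype, Finset.sum_apply, ENNReal.ofReal_sum_of_nonneg fun l _ =>
    mul_nonneg (div_nonneg (hlam l) (hOm l)) (hωnn l z)]
  refine Finset.sum_congr rfl fun l _ => ?_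
  rw [Pi.smul_apply, smul_eq_mul, ← ENNReal.ofReal_mul (hlam l), mul_div_assoc', div_mul_eq_mul_div]

theorem integral_Pbar (hωmeas : ∀ k, Measurable (ω k)) (hωnn : ∀ k z, 0 ≤ ω k z)
    (hlam : ∀ k, 0 ≤ lam k) (f : Z → ℝ) :
    ∫ z, f z ∂Pbar ω P lam = ∫ z, (∑ l, lam l / Om ω P l * ω l z) * f z ∂P := by
  have hs : ∀ z, 0 ≤ ∑ l, lam l / Om ω P l * ω l z := fun z => Finset.sum_nonneg fun l _ =>
    mul_nonneg (div_nonneg (hlam l) (integral_nonneg (hωnn l))) (hωnn l z)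
  rw [Pbar_eq_withDensity hωmeas hωnn hlam, integral_withDensity_eq_integral_toReal_smul
    (by fun_prop) (ae_of_all _ fun _ => ENNReal.ofReal_lt_top)]
  simp only [ENNReal.toReal_ofReal (hs _), smul_eq_mul]

theorem Gam_Pbar (hωmeas : ∀ k, Measurable (ω k)) (hωnn : ∀ k z, 0 ≤ ω k z)
    (hlam : ∀ k, 0 ≤ lam k) (hOm : ∀ k, 0 < Om ω P k) {W : Fin K → ℝ} (hW : ∀ k, 0 < W k)
    (k : Fin K) :
    Gam ω lam (Pbar ω P lam) W k = (W k)⁻¹ * ∫ z, (∑ l, lam l / Om ω P l * ω l z) *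
      (ω k z / ∑ l, lam l / Om ω P l * (Om ω P l / W l) * ω l z) ∂P := by
  have hD : ∀ z, ∑ l, lam l / W l * ω l z = ∑ l, lam l / Om ω P l * (Om ω P l / W l) * ω l z :=
    fun z => Finset.sum_congr rfl fun l _ => by field_simp [(hOm l).ne', (hW l).ne']
  simp only [Gam, hD, integral_Pbar hωmeas hωnn hlam]

theorem isSol_Om_div (hK : 0 < K) (hωmeas : ∀ k, Measurable (ω k)) (hωnn : ∀ k z, 0 ≤ ω k z)
    (hlam : ∀ k, 0 < lam k) (hOm : ∀ k, 0 < Om ω P k) :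
    IsSol hK ω lam (Pbar ω P lam) fun k => Om ω P k / Om ω P ⟨K - 1, Nat.sub_lt hK one_pos⟩ := by
  set n : Fin K := ⟨K - 1, Nat.sub_lt hK one_pos⟩
  refine ⟨fun k => div_pos (hOm k) (hOm n), div_self (hOm n).ne', fun k => ?_⟩
  have hφ : ∀ l, Om ω P l / (Om ω P l / Om ω P n) = Om ω P n :=
    fun l => div_div_cancel₀ (hOm l).ne'
  rw [Gam_Pbar hωmeas hωnn (hlam · |>.le) hOm (fun l => div_pos (hOm l) (hOm n))]
  simp only [hφ, sum_mul_div_sum_mul_const (fun l => div_pos (hlam l) (hOm l)) (hωnn · _)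
    (hOm n).ne', integral_div]
  exact inv_mul_cancel₀ (div_pos (hOm k) (hOm n)).ne'

theorem eq_Om_div_of_isSol (hK : 0 < K) (hωmeas : ∀ k, Measurable (ω k))
    (hωnn : ∀ k z, 0 ≤ ω k z) (hωint : ∀ k, Integrable (ω k) P) (hlam : ∀ k, 0 < lam k)
    (hOm : ∀ k, 0 < Om ω P k) {κ : ℝ} (hκ : 0 < κ) (hconn : (biasGraph ω P κ).Connected)
    {W : Fin K → ℝ} (hW : IsSol hK ω lam (Pbar ω P lam) W) :
    W = fun k => Om ω P k / Om ω P ⟨K - 1, Nat.sub_lt hK one_pos⟩ := by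
  set n : Fin K := ⟨K - 1, Nat.sub_lt hK one_pos⟩
  obtain ⟨hWpos, hWn, hWsol⟩ := hW
  set φ : Fin K → ℝ := fun l => Om ω P l / W l
  have hsol : ∀ x, ∫ z, (∑ l, lam l / Om ω P l * ω l z) *
      (ω x z / ∑ l, lam l / Om ω P l * φ l * ω l z) ∂P = (∫ z, ω x z ∂P) / φ x := fun x => by
    have h := hWsol x
    rw [Gam_Pbar hωmeas hωnn (hlam · |>.le) hOm hWpos, inv_mul_eq_one₀ (hWpos x).ne'] at h
    rw [← h]
    exact (div_div_cancel₀ (hOm x).ne').symm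
  have : Nonempty (Fin K) := ⟨n⟩
  obtain ⟨m, hm⟩ := Finite.exists_max φ
  have hconst := hconn.eq_of_isMax_of_adj hm fun x y hmax hxy =>
    eq_of_integral_sum_mul_div_eq (fun l => div_pos (hlam l) (hOm l))
      (fun l => div_pos (hOm l) (hWpos l)) hωnn hωint hmax (hsol x) (hκ.trans_le hxy.2).ne'
  funext k
  have hk : Om ω P k / W k = Om ω P n / W n := (hconst k).trans (hconst n).symm
  rw [hWn, div_one, div_eq_iff (hWpos k).ne'] at hk
  rw [hk, mul_div_cancel_left₀ _ (hOm n).ne']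

end Mixture

theorem true_system_unique_solution_general
    {q : ℕ} {Zs : Set (EuclideanSpace ℝ (Fin q))}
    {K : ℕ} (hK : 0 < K)
    (P : Measure ↥Zs)
    (ω : Fin K → ↥Zs → ℝ)
    (hωmeas : ∀ k, Measurable (ω k)) (hωnn : ∀ k z, 0 ≤ ω k z)
    (hωint : ∀ k, Integrable (ω k) P)
    (hOmpos : ∀ k, 0 < Om ω P k)
    (lam : Fin K → ℝ) (hlam : ∀ k, lam k ∈ Set.Ioo (0:ℝ) 1)
    (κ : ℝ) (hκ : 0 < κ) (hconn : (biasGraph ω P κ).Connected)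
    :
    ∃! W : Fin K → ℝ, IsSol hK ω lam (Pbar ω P lam) W :=
  ⟨_, isSol_Om_div hK hωmeas hωnn (hlam · |>.1) hOmpos,
    fun _ hW => eq_Om_div_of_isSol hK hωmeas hωnn hωint (hlam · |>.1) hOmpos hκ hconn hW⟩

/-- Under connectivity of `G_κ`, the true system `Γ_k(W) = 1` has a unique
positive solution normalized by `W_K = 1`. -/
theorem true_system_unique_solution
    {q : ℕ} {Zs : Set (EuclideanSpace ℝ (Fin q))} (hZs : MeasurableSet Zs)
    {K : ℕ} (hK : 0 < K)
    (P : Measure ↥Zs) [IsProbabilityMeasure P]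
    (ω : Fin K → ↥Zs → ℝ)
    (hωmeas : ∀ k, Measurable (ω k)) (hωnn : ∀ k z, 0 ≤ ω k z)
    (hωint : ∀ k, Integrable (ω k) P)
    (hOmpos : ∀ k, 0 < Om ω P k)
    (lam : Fin K → ℝ) (hlam : ∀ k, lam k ∈ Set.Ioo (0:ℝ) 1) (hlamsum : ∑ k, lam k = 1)
    (κ : ℝ) (hκ : 0 < κ) (hconn : (biasGraph ω P κ).Connected)
    :
    ∃! W : Fin K → ℝ, IsSol hK ω lam (Pbar ω P lam) W :=
  true_system_unique_solution_general hK P ω hωmeas hωnn hωint hOmpos lam hlam κ hκ hconn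

end SelBias
end
end

section
/- Let ĥ_n : Z → ℝ be a random measurable function and h : Z → ℝ a measurable function with a ≤ h(z) ≤ b for all z ∈ Z. If Assumption (A1) holds, then for every δ ∈ (0,1), with probability at least 1 − δ: |∫ ĥ_n(z) dP̃_n(z) − ∫ h(z) dP̄(z)| ≤ sup_z |ĥ_n(z) − h(z)| + K C sup_z |h(z)| / √n + (b − a) √( log(2K/δ) / (2 λ̲ n) ). -/
/-!
For each sample `k` write
`λ̂_k P̂_k ĥ - λ_k P_k h = λ̂_k P̂_k (ĥ - h) - (λ_k - λ̂_k) P̂_k h + λ_k (P̂_k h - P_k h)`.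
The first two terms are bounded deterministically, by `sup |ĥ - h|` and `C sup |h| / √n`.
For the last one, Hoeffding's inequality for the `n_k ≥ λ̲ n` independent values
`h (Z_{k,i}) ∈ [a, b]` gives `|P̂_k h - P_k h| ≤ (b - a) √(log (2K/δ) / (2 λ̲ n))` outside an
event of probability `δ / K`, and a union bound over the `K` samples concludes.
-/

open MeasureTheory ProbabilityTheory Real Finset
open scoped ENNReal NNReal

noncomputable section

namespace SelBias

variable {Z : Type*} [MeasurableSpace Z]

section Hoeffding

variable {Ω ι : Type*} [MeasurableSpace Ω] {μ : Measure Ω} [IsProbabilityMeasure μ] [Fintype ι]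
  {Y : ι → Ω → ℝ} {a b c ε : ℝ}

lemma measureReal_sum_sub_ge_le (hind : iIndepFun Y μ) (hmeas : ∀ i, AEMeasurable (Y i) μ)
    (hY : ∀ i, ∀ᵐ ω ∂μ, Y i ω ∈ Set.Icc a b) (hc : ∀ i, μ[Y i] = c) (hε : 0 ≤ ε) :
    μ.real {ω | ε ≤ ∑ i, (Y i ω - c)} ≤
      exp (-2 * ε ^ 2 / (Fintype.card ι * (b - a) ^ 2)) := by
  have hsub (i : ι) : HasSubgaussianMGF (fun ω => Y i ω - c) ((‖b - a‖₊ / 2) ^ 2) μ := by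
    simpa only [hc i] using hasSubgaussianMGF_of_mem_Icc (hmeas i) (hY i)
  have hind' : iIndepFun (fun i ω => Y i ω - c) μ :=
    hind.comp (fun _ x => x - c) fun _ => by fun_prop
  refine (HasSubgaussianMGF.measure_sum_ge_le_of_iIndepFun hind' (fun i _ => hsub i) hε).trans_eq ?_
  congr 1
  simp only [Finset.sum_const, Finset.card_univ, nsmul_eq_mul, NNReal.coe_mul, NNReal.coe_natCast,
    NNReal.coe_pow, NNReal.coe_div, coe_nnnorm, Real.norm_eq_abs, NNReal.coe_ofNat, div_pow, sq_abs]
  rw [show (2:ℝ) * (Fintype.card ι * ((b - a) ^ 2 / 2 ^ 2)) = Fintype.card ι * (b - a) ^ 2 / 2 by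
    ring, div_div_eq_mul_div]
  ring

lemma measureReal_abs_sum_sub_ge_le (hind : iIndepFun Y μ) (hmeas : ∀ i, AEMeasurable (Y i) μ)
    (hY : ∀ i, ∀ᵐ ω ∂μ, Y i ω ∈ Set.Icc a b) (hc : ∀ i, μ[Y i] = c) (hε : 0 ≤ ε) :
    μ.real {ω | ε ≤ |∑ i, (Y i ω - c)|} ≤
      2 * exp (-2 * ε ^ 2 / (Fintype.card ι * (b - a) ^ 2)) := by
  have hneg := measureReal_sum_sub_ge_le (Y := fun i ω => -Y i ω) (a := -b) (b := -a) (c := -c)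
    (hind.comp (fun _ x => -x) fun _ => measurable_neg) (fun i => (hmeas i).neg)
    (fun i => (hY i).mono fun ω h => ⟨neg_le_neg h.2, neg_le_neg h.1⟩)
    (fun i => by rw [integral_neg, hc i]) hε
  rw [show -a - -b = b - a by ring] at hneg
  calc μ.real {ω | ε ≤ |∑ i, (Y i ω - c)|}
      ≤ μ.real ({ω | ε ≤ ∑ i, (Y i ω - c)} ∪ {ω | ε ≤ ∑ i, (-Y i ω - -c)}) := by
        refine measureReal_mono fun ω (hω : ε ≤ |_|) => ?_
        rcases le_abs'.mp hω with h | h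
        · right
          simpa [Finset.sum_neg_distrib, neg_add_eq_sub, ← sub_eq_add_neg] using
            (le_neg.mp h)
        · exact Or.inl h
    _ ≤ _ := measureReal_union_le _ _
    _ ≤ _ := by
        rw [two_mul]
        exact add_le_add (measureReal_sum_sub_ge_le hind hmeas hY hc hε) hneg

end Hoeffding

section EmpiricalMeasure

variable {m : ℕ} {X : ℕ → Z} {f : Z → ℝ}

instance isProbabilityMeasure_empDist [NeZero m] : IsProbabilityMeasure (empDist m X) := by
  constructor
  simpa [empDist] using ENNReal.inv_mul_cancel (by simp [NeZero.ne m]) (by simp)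

lemma integrable_empDist (hf : Measurable f) : Integrable f (empDist m X) := by
  rcases eq_or_ne m 0 with rfl | hm
  · simp [empDist]
  refine (integrable_finsetSum_measure.mpr fun i _ => ?_).smul_measure (by simp [hm])
  exact integrable_dirac' hf.stronglyMeasurable enorm_lt_top

lemma integral_empDist (hf : Measurable f) :
    ∫ z, f z ∂(empDist m X) = (m : ℝ)⁻¹ * ∑ i ∈ Finset.range m, f (X i) := by
  rw [empDist, integral_smul_measure, integral_finsetSum_measure fun i _ =>
    integrable_dirac' hf.stronglyMeasurable enorm_lt_top]
  simp [integral_dirac' f _ hf.stronglyMeasurable]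

end EmpiricalMeasure

lemma abs_integral_le_of_forall_abs_le {ν : Measure Z} [IsProbabilityMeasure ν] {f : Z → ℝ}
    {M : ℝ} (hf : ∀ z, |f z| ≤ M) : |∫ z, f z ∂ν| ≤ M := by
  simpa using norm_integral_le_of_norm_le_const (f := f) (ae_of_all ν hf)

lemma integral_pooledDist {K : ℕ} (nv : Fin K → ℕ) (X : Fin K → ℕ → Z) {f : Z → ℝ}
    (hf : Measurable f) :
    ∫ z, f z ∂(pooledDist nv X) =
      ∑ k, (nv k : ℝ) / (∑ j, nv j : ℕ) * ∫ z, f z ∂(empDist (nv k) (X k)) := by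
  have hfinite (k : Fin K) : (nv k : ℝ≥0∞) / ((∑ j, nv j : ℕ) : ℝ≥0∞) ≠ ⊤ := by
    rcases eq_or_ne (∑ j, nv j) 0 with hsum | hsum
    · simp [Finset.sum_eq_zero_iff.mp hsum k]
    · exact ENNReal.div_ne_top (by simp) (by simpa using hsum)
  rw [pooledDist, integral_finsetSum_measure fun k _ =>
    (integrable_empDist hf).smul_measure (hfinite k)]
  simp only [integral_smul_measure, ENNReal.toReal_div, ENNReal.toReal_natCast, smul_eq_mul]

lemma integral_sum_ofReal_smul_measure {ι : Type*} {s : Finset ι} {ν : ι → Measure Z}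
    {w : ι → ℝ} (hw : ∀ i ∈ s, 0 ≤ w i) {f : Z → ℝ} (hf : ∀ i ∈ s, Integrable f (ν i)) :
    ∫ z, f z ∂(∑ i ∈ s, ENNReal.ofReal (w i) • ν i) = ∑ i ∈ s, w i * ∫ z, f z ∂(ν i) := by
  rw [integral_finsetSum_measure fun i hi => (hf i hi).smul_measure ENNReal.ofReal_ne_top]
  refine Finset.sum_congr rfl fun i hi => ?_
  rw [integral_smul_measure, ENNReal.toReal_ofReal (hw i hi), smul_eq_mul]

lemma measure_abs_integral_empDist_sub_gt_le {Ω : Type*} [MeasurableSpace Ω] {μ : Measure Ω}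
    [IsProbabilityMeasure μ] {P : Measure Z} [IsProbabilityMeasure P] {m : ℕ} {N : ℝ}
    (hN : 0 < N) (hNm : N ≤ m) {X : ℕ → Ω → Z} (hX : ∀ i, Measurable (X i))
    (hlaw : ∀ i < m, μ.map (X i) = P) (hind : iIndepFun (fun (i : Fin m) => X i) μ)
    {f : Z → ℝ} (hf : Measurable f) {a b : ℝ} (hfab : ∀ z, f z ∈ Set.Icc a b) {L : ℝ}
    (hL : 0 ≤ L) :
    μ {ω | (b - a) * √(L / (2 * N)) < |∫ z, f z ∂(empDist m fun i => X i ω) - ∫ z, f z ∂P|} ≤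
      ENNReal.ofReal (2 * exp (-L)) := by
  have hmR : (0 : ℝ) < m := hN.trans_le hNm
  have : NeZero m := ⟨Nat.cast_pos.mp hmR |>.ne'⟩
  obtain ⟨z₀⟩ := nonempty_of_isProbabilityMeasure P
  -- For `a = b` the Hoeffding exponent has a zero denominator, but then `f` is constant.
  rcases (hfab z₀).1.trans (hfab z₀).2 |>.eq_or_lt with rfl | hab
  · have hconst : f = fun _ => a := funext fun z => le_antisymm (hfab z).2 (hfab z).1
    simp [hconst]
  set s := (b - a) * √(L / (2 * m))
  have hs : s ≤ (b - a) * √(L / (2 * N)) :=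
    mul_le_mul_of_nonneg_left (sqrt_le_sqrt (div_le_div_of_nonneg_left hL (by positivity)
      (by linarith))) (sub_pos.mpr hab).le
  set Y : Fin m → Ω → ℝ := fun i ω => f (X i ω)
  have hmean (i : Fin m) : μ[Y i] = ∫ z, f z ∂P := by
    rw [← hlaw i i.isLt, integral_map (hX i).aemeasurable hf.aestronglyMeasurable]
  have hsum (ω : Ω) : ∫ z, f z ∂(empDist m fun i => X i ω) - ∫ z, f z ∂P =
      (m : ℝ)⁻¹ * ∑ i, (Y i ω - ∫ z, f z ∂P) := by
    rw [integral_empDist hf, ← Fin.sum_univ_eq_sum_range (fun i => f (X i ω)),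
      Finset.sum_sub_distrib]
    simp [Y, mul_sub, hmR.ne']
  have hexp : -2 * (m * s) ^ 2 / (Fintype.card (Fin m) * (b - a) ^ 2) = -L := by
    rw [Fintype.card_fin, mul_pow, mul_pow, sq_sqrt (by positivity)]
    field_simp [(sub_pos.mpr hab).ne']
  calc μ {ω | (b - a) * √(L / (2 * N)) <
        |∫ z, f z ∂(empDist m fun i => X i ω) - ∫ z, f z ∂P|}
      ≤ μ {ω | m * s ≤ |∑ i, (Y i ω - ∫ z, f z ∂P)|} := by
        refine measure_mono fun ω (hω : (b - a) * √(L / (2 * N)) < |_|) => ?_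
        rw [hsum, abs_mul, abs_inv, Nat.abs_cast, lt_inv_mul_iff₀ hmR] at hω
        exact (mul_le_mul_of_nonneg_left hs hmR.le).trans hω.le
    _ = ENNReal.ofReal (μ.real {ω | m * s ≤ |∑ i, (Y i ω - ∫ z, f z ∂P)|}) :=
        (ofReal_measureReal (measure_ne_top _ _)).symm
    _ ≤ ENNReal.ofReal (2 * exp (-L)) := by
        refine ENNReal.ofReal_le_ofReal ?_
        rw [← hexp]
        exact measureReal_abs_sum_sub_ge_le (hind.comp (fun _ => f) fun _ => hf)
          (fun i => (hf.comp (hX i)).aemeasurable) (fun i => ae_of_all _ fun ω => hfab _) hmean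
          (by positivity)

lemma abs_sum_mul_sub_sum_mul_le {ι : Type*} [Fintype ι] {w lam A B c : ι → ℝ} {S M e t : ℝ}
    (hw : ∀ i, 0 ≤ w i) (hw1 : ∑ i, w i = 1) (hlam : ∀ i, 0 ≤ lam i) (hlam1 : ∑ i, lam i = 1)
    (hA : ∀ i, |A i - B i| ≤ S) (hB : ∀ i, |B i| ≤ M) (he : ∀ i, |lam i - w i| ≤ e)
    (hc : ∀ i, |B i - c i| ≤ t) :
    |∑ i, w i * A i - ∑ i, lam i * c i| ≤ S + Fintype.card ι * e * M + t := by
  have hterm (i : ι) : |w i * A i - lam i * c i| ≤ w i * S + e * M + lam i * t := by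
    rw [show w i * A i - lam i * c i =
      w i * (A i - B i) - (lam i - w i) * B i + lam i * (B i - c i) by ring]
    refine (abs_add_le _ _).trans (add_le_add ((abs_sub _ _).trans (add_le_add ?_ ?_)) ?_)
    · rw [abs_mul, abs_of_nonneg (hw i)]
      exact mul_le_mul_of_nonneg_left (hA i) (hw i)
    · rw [abs_mul]
      exact mul_le_mul (he i) (hB i) (abs_nonneg _) ((abs_nonneg _).trans (he i))
    · rw [abs_mul, abs_of_nonneg (hlam i)]
      exact mul_le_mul_of_nonneg_left (hc i) (hlam i)
  calc |∑ i, w i * A i - ∑ i, lam i * c i|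
      = |∑ i, (w i * A i - lam i * c i)| := by rw [Finset.sum_sub_distrib]
    _ ≤ ∑ i, (w i * S + e * M + lam i * t) :=
        (Finset.abs_sum_le_sum_abs _ _).trans (Finset.sum_le_sum fun i _ => hterm i)
    _ = S + Fintype.card ι * e * M + t := by
        simp only [Finset.sum_add_distrib, ← Finset.sum_mul, hw1, hlam1, Finset.sum_const,
          Finset.card_univ, nsmul_eq_mul]
        ring

lemma ofReal_one_sub_le_measure_iInter {Ω ι : Type*} [MeasurableSpace Ω] {μ : Measure Ω}
    [IsProbabilityMeasure μ] [Fintype ι] {E : ι → Set Ω} {δ : ℝ} (hδ : 0 ≤ δ)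
    (hE : ∀ i, μ (E i)ᶜ ≤ ENNReal.ofReal (δ / Fintype.card ι)) :
    ENNReal.ofReal (1 - δ) ≤ μ (⋂ i, E i) := by
  have hunion : μ (⋂ i, E i)ᶜ ≤ ENNReal.ofReal δ := by
    rw [Set.compl_iInter]
    calc μ (⋃ i, (E i)ᶜ) ≤ ∑ i, μ (E i)ᶜ := measure_iUnion_fintype_le _ _
      _ ≤ ∑ _i : ι, ENNReal.ofReal (δ / Fintype.card ι) := Finset.sum_le_sum fun i _ => hE i
      _ = ENNReal.ofReal (Fintype.card ι * (δ / Fintype.card ι)) := by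
        rw [Finset.sum_const, Finset.card_univ, nsmul_eq_mul, ENNReal.ofReal_mul (by positivity),
          ENNReal.ofReal_natCast]
      _ ≤ ENNReal.ofReal δ := by
        refine ENNReal.ofReal_le_ofReal ?_
        rcases eq_or_ne (Fintype.card ι : ℝ) 0 with h | h
        · simpa [h] using hδ
        · rw [mul_div_cancel₀ _ h]
  rw [ENNReal.ofReal_sub _ hδ, ENNReal.ofReal_one, tsub_le_iff_right]
  calc (1 : ℝ≥0∞) = μ Set.univ := measure_univ.symm
    _ ≤ μ (⋂ i, E i) + μ (⋂ i, E i)ᶜ := measure_univ_le_add_compl _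
    _ ≤ μ (⋂ i, E i) + ENNReal.ofReal δ := add_le_add_right hunion _

lemma abs_integral_pooledDist_sub_integral_mixture_le {K : ℕ} {nv : Fin K → ℕ} {n : ℕ}
    (hn : n = ∑ k, nv k) (hnv : ∀ k, 0 < nv k) {X : Fin K → ℕ → Z} {P : Fin K → Measure Z}
    {lam : Fin K → ℝ} (hlam : ∀ k, 0 ≤ lam k) (hlamsum : ∑ k, lam k = 1) {e t : ℝ}
    (hfluct : ∀ k, |lam k - (nv k : ℝ) / n| ≤ e) {g f : Z → ℝ} (hg : Measurable g)
    (hf : Measurable f) (hfP : ∀ k, Integrable f (P k))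
    (hgf : BddAbove (Set.range fun z => |g z - f z|)) (hfb : BddAbove (Set.range fun z => |f z|))
    (hdev : ∀ k, |∫ z, f z ∂(empDist (nv k) (X k)) - ∫ z, f z ∂(P k)| ≤ t) :
    |∫ z, g z ∂(pooledDist nv X) - ∫ z, f z ∂(∑ k, ENNReal.ofReal (lam k) • P k)| ≤
      (⨆ z, |g z - f z|) + K * e * (⨆ z, |f z|) + t := by
  have hn0 : (0 : ℝ) < n := by
    obtain ⟨k⟩ : Nonempty (Fin K) := by
      by_contra hK
      simp [not_nonempty_iff.mp hK] at hlamsum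
    rw [hn, Nat.cast_sum]
    exact Finset.sum_pos (fun k _ => Nat.cast_pos.mpr (hnv k)) ⟨k, Finset.mem_univ _⟩
  have hprob (k : Fin K) : IsProbabilityMeasure (empDist (nv k) (X k)) :=
    have : NeZero (nv k) := ⟨(hnv k).ne'⟩
    inferInstance
  rw [integral_pooledDist _ _ hg, ← hn, integral_sum_ofReal_smul_measure (fun k _ => hlam k)
    fun k _ => hfP k]
  refine (abs_sum_mul_sub_sum_mul_le (w := fun k => (nv k : ℝ) / n) (S := ⨆ z, |g z - f z|)
    (M := ⨆ z, |f z|) (fun k => by positivity) ?_ hlam hlamsum (fun k => ?_) (fun k => ?_)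
    hfluct hdev).trans_eq (by rw [Fintype.card_fin])
  · rw [← Finset.sum_div, div_eq_one_iff_eq hn0.ne', hn, Nat.cast_sum]
  · rw [← integral_sub (integrable_empDist hg) (integrable_empDist hf)]
    exact abs_integral_le_of_forall_abs_le fun z => le_ciSup hgf z
  · exact abs_integral_le_of_forall_abs_le fun z => le_ciSup hfb z

theorem pooled_integral_deviation_general
    {q : ℕ} {Zs : Set (EuclideanSpace ℝ (Fin q))}
    {K : ℕ} (hK : 0 < K)
    (Pks : Fin K → Measure ↥Zs) (hPks : ∀ k, IsProbabilityMeasure (Pks k))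
    (lam : Fin K → ℝ) (hlam : ∀ k, lam k ∈ Set.Ioo (0:ℝ) 1) (hlamsum : ∑ k, lam k = 1)
    (C lamlow : ℝ) (hlamlow : 0 < lamlow)
    {α : Type} [MeasurableSpace α] (Pr : Measure α) [IsProbabilityMeasure Pr]
    (nv : Fin K → ℕ) (n : ℕ) (hn : n = ∑ k, nv k) (hnv : ∀ k, 0 < nv k)
    (X : Fin K → ℕ → α → ↥Zs)
    (hXmeas : ∀ k i, Measurable (X k i))
    (hXlaw : ∀ k, ∀ i < nv k, Measure.map (X k i) Pr = Pks k)
    (hXindep : iIndepFun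
      (fun (p : Σ k : Fin K, Fin (nv k)) => fun a => X p.1 p.2 a) Pr)
    (hfluct : ∀ k, |lam k - (nv k : ℝ) / n| ≤ C / Real.sqrt n)
    (hlow : ∀ k, lamlow ≤ (nv k : ℝ) / n)
    (hhat : α → ↥Zs → ℝ) (h : ↥Zs → ℝ)
    (hhatmeas : ∀ a, Measurable (hhat a)) (hmeas : Measurable h)
    (lo hi : ℝ) (hbound : ∀ z, lo ≤ h z ∧ h z ≤ hi)
    (hbdd : ∀ a, BddAbove (Set.range fun z => |hhat a z - h z|))
    (δ : ℝ) (hδ : δ ∈ Set.Ioo (0:ℝ) 1) :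
    ENNReal.ofReal (1 - δ) ≤
      Pr {a |
        |(∫ z, hhat a z ∂(pooledDist nv fun k i => X k i a)) -
            ∫ z, h z ∂(∑ k, ENNReal.ofReal (lam k) • Pks k)| ≤
          (⨆ z, |hhat a z - h z|) + (K : ℝ) * C * (⨆ z, |h z|) / Real.sqrt n +
            (hi - lo) * Real.sqrt (Real.log (2 * K / δ) / (2 * lamlow * n))} := by
  have hn0 : (0 : ℝ) < n :=
    Nat.cast_pos.mpr (hn ▸ Finset.sum_pos (fun k _ => hnv k) ⟨⟨0, hK⟩, Finset.mem_univ _⟩)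
  have hL : 0 ≤ log (2 * K / δ) := log_nonneg <| by
    rw [le_div_iff₀ hδ.1]
    linarith [hδ.2, (Nat.one_le_cast (α := ℝ)).mpr hK]
  have hhint (k : Fin K) : Integrable h (Pks k) :=
    Integrable.of_mem_Icc lo hi hmeas.aemeasurable (ae_of_all _ hbound)
  have hhbdd : BddAbove (Set.range fun z => |h z|) :=
    ⟨max |lo| |hi|, Set.forall_mem_range.mpr fun z => abs_le_max_abs_abs (hbound z).1 (hbound z).2⟩
  refine (ofReal_one_sub_le_measure_iInter (μ := Pr) (E := fun k => {a |
    |∫ z, h z ∂(empDist (nv k) fun i => X k i a) - ∫ z, h z ∂(Pks k)| ≤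
      (hi - lo) * √(log (2 * K / δ) / (2 * (lamlow * n)))}) hδ.1.le fun k => ?_).trans
    (measure_mono fun a ha => ?_)
  · have hnk : lamlow * n ≤ nv k := (le_div_iff₀ hn0).mp (hlow k)
    refine (measure_mono fun a ha => not_le.mp ha : _ ≤ Pr {a | _ < _}).trans <|
      (measure_abs_integral_empDist_sub_gt_le (mul_pos hlamlow hn0) hnk (hXmeas k) (hXlaw k)
        (hXindep.precomp sigma_mk_injective) hmeas hbound hL).trans_eq ?_
    rw [exp_neg, exp_log (by positivity [hδ.1]), Fintype.card_fin]
    field_simp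
  · refine (abs_integral_pooledDist_sub_integral_mixture_le hn hnv (fun k => (hlam k).1.le)
      hlamsum hfluct (hhatmeas a) hmeas hhint (hbdd a) hhbdd
      (fun k => Set.mem_iInter.mp ha k)).trans_eq ?_
    ring_nf

/-- Hoeffding-type deviation bound between the pooled empirical integral of a random
function and the mixture integral of its deterministic target. -/
theorem pooled_integral_deviation
    {q : ℕ} {Zs : Set (EuclideanSpace ℝ (Fin q))} (hZs : MeasurableSet Zs)
    [Nonempty ↥Zs]
    {K : ℕ} (hK : 0 < K)
    (Pks : Fin K → Measure ↥Zs) (hPks : ∀ k, IsProbabilityMeasure (Pks k))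
    (lam : Fin K → ℝ) (hlam : ∀ k, lam k ∈ Set.Ioo (0:ℝ) 1) (hlamsum : ∑ k, lam k = 1)
    (C lamlow : ℝ) (hC : 0 ≤ C) (hlamlow : 0 < lamlow)
    {α : Type} [MeasurableSpace α] (Pr : Measure α) [IsProbabilityMeasure Pr]
    (nv : Fin K → ℕ) (n : ℕ) (hn : n = ∑ k, nv k) (hnv : ∀ k, 0 < nv k)
    (X : Fin K → ℕ → α → ↥Zs)
    (hXmeas : ∀ k i, Measurable (X k i))
    (hXlaw : ∀ k, ∀ i < nv k, Measure.map (X k i) Pr = Pks k)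
    (hXindep : iIndepFun
      (fun (p : Σ k : Fin K, Fin (nv k)) => fun a => X p.1 p.2 a) Pr)
    (hfluct : ∀ k, |lam k - (nv k : ℝ) / n| ≤ C / Real.sqrt n)
    (hlow : ∀ k, lamlow ≤ (nv k : ℝ) / n)
    (hhat : α → ↥Zs → ℝ) (h : ↥Zs → ℝ)
    (hhatmeas : ∀ a, Measurable (hhat a)) (hmeas : Measurable h)
    (lo hi : ℝ) (hbound : ∀ z, lo ≤ h z ∧ h z ≤ hi)
    (hbdd : ∀ a, BddAbove (Set.range fun z => |hhat a z - h z|))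
    (δ : ℝ) (hδ : δ ∈ Set.Ioo (0:ℝ) 1) :
    ENNReal.ofReal (1 - δ) ≤
      Pr {a |
        |(∫ z, hhat a z ∂(pooledDist nv fun k i => X k i a)) -
            ∫ z, h z ∂(∑ k, ENNReal.ofReal (lam k) • Pks k)| ≤
          (⨆ z, |hhat a z - h z|) + (K : ℝ) * C * (⨆ z, |h z|) / Real.sqrt n +
            (hi - lo) * Real.sqrt (Real.log (2 * K / δ) / (2 * lamlow * n))} :=
  pooled_integral_deviation_general hK Pks hPks lam hlam hlamsum C lamlow hlamlow Pr nv n hn hnv X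
    hXmeas hXlaw hXindep hfluct hlow hhat h hhatmeas hmeas lo hi hbound hbdd δ hδ

end SelBias
end
end

section
/- Let λ, λ̂ ∈ (0,1)^K with Σ_k λ_k = Σ_k λ̂_k = 1, λ_k ≥ λ_min, λ̂_k ≥ λ̲ and |λ̂_k − λ_k| ≤ C/√n for all k, and let W, Ŵ ∈ [B', B]^K with 0 < B' ≤ B. Suppose 0 < m ≤ max_k ω_k(z) and max_k ω_k(z) ≤ M for all z. Then, with λ̲̲ = min{λ̲, λ_min}, for every z ∈ Z: | (Σ_{k=1}^K λ̂_k ω_k(z)/Ŵ_k)^{−1} − (Σ_{k=1}^K λ_k ω_k(z)/W_k)^{−1} | ≤ M (B/(m λ̲̲))² ( K C/(B' √n) + (1/B'²) Σ_{k=1}^K λ_k |Ŵ_k − W_k| ). -/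
/-!
At the point `z` some `ω_k(z)` is at least `m`, so both weighted sums are at least
`m λ̲̲ / B`, and the difference of their reciprocals is at most `(B / (m λ̲̲))²` times the
difference of the sums. Each term of that difference splits as
`λ̂ ω / Ŵ - λ ω / W = ω ((λ̂ - λ) / Ŵ - λ (Ŵ - W) / (W Ŵ))`: a proportion fluctuation and a
weight drift.
-/

open MeasureTheory ProbabilityTheory Real Finset
open scoped ENNReal NNReal

noncomputable section

namespace SelBias

variable {Z : Type*} [MeasurableSpace Z]

theorem abs_inv_sub_inv_le_of_le {a S T : ℝ} (ha : 0 < a) (hS : a ≤ S) (hT : a ≤ T) :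
    |S⁻¹ - T⁻¹| ≤ |S - T| / a ^ 2 := by
  have hS0 : 0 < S := ha.trans_le hS
  have hT0 : 0 < T := ha.trans_le hT
  rw [inv_sub_inv hS0.ne' hT0.ne', abs_div, abs_of_pos (mul_pos hS0 hT0), abs_sub_comm]
  exact div_le_div_of_nonneg_left (abs_nonneg _) (by positivity)
    (pow_two a ▸ mul_le_mul hS hT ha.le hS0.le)

theorem abs_mul_div_sub_mul_div_le {a â w W Ŵ B' δ M : ℝ} (hB' : 0 < B') (hW : B' ≤ W)
    (hŴ : B' ≤ Ŵ) (ha : 0 ≤ a) (hw : 0 ≤ w) (hwM : w ≤ M) (hδ : |â - a| ≤ δ) :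
    |â * w / Ŵ - a * w / W| ≤ M * (δ / B' + a * |Ŵ - W| / B' ^ 2) := by
  have hW0 : 0 < W := hB'.trans_le hW
  have hŴ0 : 0 < Ŵ := hB'.trans_le hŴ
  have hsplit : â * w / Ŵ - a * w / W = w * ((â - a) / Ŵ - a * (Ŵ - W) / (W * Ŵ)) := by
    field_simp
    ring
  have hfluct : |(â - a) / Ŵ| ≤ δ / B' := by
    rw [abs_div, abs_of_pos hŴ0]
    exact div_le_div₀ ((abs_nonneg _).trans hδ) hδ hB' hŴ
  have hdrift : |a * (Ŵ - W) / (W * Ŵ)| ≤ a * |Ŵ - W| / B' ^ 2 := by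
    rw [abs_div, abs_mul, abs_of_nonneg ha, abs_of_pos (mul_pos hW0 hŴ0)]
    exact div_le_div_of_nonneg_left (by positivity) (by positivity)
      (pow_two B' ▸ mul_le_mul hW hŴ hB'.le hW0.le)
  calc |â * w / Ŵ - a * w / W|
      = w * |(â - a) / Ŵ - a * (Ŵ - W) / (W * Ŵ)| := by rw [hsplit, abs_mul, abs_of_nonneg hw]
    _ ≤ M * (|(â - a) / Ŵ| + |a * (Ŵ - W) / (W * Ŵ)|) :=
      mul_le_mul hwM (abs_sub _ _) (abs_nonneg _) (hw.trans hwM)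
    _ ≤ M * (δ / B' + a * |Ŵ - W| / B' ^ 2) :=
      mul_le_mul_of_nonneg_left (add_le_add hfluct hdrift) (hw.trans hwM)

section WeightedSums

variable {ι : Type*} [Fintype ι]

theorem mul_div_le_sum_mul_div {a w W : ι → ℝ} {c m B : ℝ} (hc : 0 ≤ c) (ha : ∀ i, c ≤ a i)
    (hw : ∀ i, 0 ≤ w i) (hW : ∀ i, 0 < W i) (hWB : ∀ i, W i ≤ B) (hm : 0 ≤ m) {i₀ : ι}
    (hmw : m ≤ w i₀) : m * c / B ≤ ∑ i, a i * w i / W i := by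
  have hterm : ∀ i ∈ univ, 0 ≤ a i * w i / W i := fun i _ =>
    div_nonneg (mul_nonneg (hc.trans (ha i)) (hw i)) (hW i).le
  calc m * c / B ≤ a i₀ * w i₀ / W i₀ :=
        div_le_div₀ (mul_nonneg (hc.trans (ha i₀)) (hw i₀))
          (mul_comm m c ▸ mul_le_mul (ha i₀) hmw hm (hc.trans (ha i₀))) (hW i₀) (hWB i₀)
    _ ≤ ∑ i, a i * w i / W i := single_le_sum hterm (mem_univ i₀)

theorem abs_sum_mul_div_sub_sum_mul_div_le {a â w W Ŵ : ι → ℝ} {B' δ M : ℝ} (hB' : 0 < B')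
    (hW : ∀ i, B' ≤ W i) (hŴ : ∀ i, B' ≤ Ŵ i) (ha : ∀ i, 0 ≤ a i) (hw : ∀ i, 0 ≤ w i)
    (hwM : ∀ i, w i ≤ M) (hδ : ∀ i, |â i - a i| ≤ δ) :
    |∑ i, â i * w i / Ŵ i - ∑ i, a i * w i / W i| ≤
      M * (Fintype.card ι * δ / B' + (1 / B' ^ 2) * ∑ i, a i * |Ŵ i - W i|) :=
  calc |∑ i, â i * w i / Ŵ i - ∑ i, a i * w i / W i|
      ≤ ∑ i, |â i * w i / Ŵ i - a i * w i / W i| := by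
        rw [← sum_sub_distrib]
        exact abs_sum_le_sum_abs _ _
    _ ≤ ∑ i, M * (δ / B' + a i * |Ŵ i - W i| / B' ^ 2) := sum_le_sum fun i _ =>
        abs_mul_div_sub_mul_div_le hB' (hW i) (hŴ i) (ha i) (hw i) (hwM i) (hδ i)
    _ = M * (Fintype.card ι * δ / B' + (1 / B' ^ 2) * ∑ i, a i * |Ŵ i - W i|) := by
        rw [← mul_sum, sum_add_distrib, sum_const, card_univ, nsmul_eq_mul, ← sum_div]
        ring

end WeightedSums

theorem pointwise_weight_stability_general
    {q : ℕ} {Zs : Set (EuclideanSpace ℝ (Fin q))}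
    {K : ℕ}
    (ω : Fin K → ↥Zs → ℝ) (hωnn : ∀ k z, 0 ≤ ω k z)
    (m M : ℝ) (hm : 0 < m) (hmlow : ∀ z, ∃ k, m ≤ ω k z) (hMup : ∀ k z, ω k z ≤ M)
    (n : ℕ) (C lamlow lammin : ℝ)
    (hlamlow : 0 < lamlow) (hlammin : 0 < lammin)
    (lam lamhat : Fin K → ℝ)
    (hlmin : ∀ k, lammin ≤ lam k) (hlhat : ∀ k, lamlow ≤ lamhat k)
    (hfluct : ∀ k, |lamhat k - lam k| ≤ C / Real.sqrt n)
    (B B' : ℝ) (hB' : 0 < B')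
    (W What : Fin K → ℝ)
    (hWB : ∀ k, W k ∈ Set.Icc B' B) (hWhB : ∀ k, What k ∈ Set.Icc B' B) :
    ∀ z : ↥Zs,
      |(∑ k, lamhat k * ω k z / What k)⁻¹ - (∑ k, lam k * ω k z / W k)⁻¹| ≤
        M * (B / (m * min lamlow lammin)) ^ 2 *
          ((K : ℝ) * C / (B' * Real.sqrt n) +
            (1 / B' ^ 2) * ∑ k, lam k * |What k - W k|) := by
  intro z
  obtain ⟨k₀, hk₀⟩ := hmlow z
  have hc : 0 < min lamlow lammin := lt_min hlamlow hlammin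
  have hW : ∀ k, 0 < W k := fun k => hB'.trans_le (hWB k).1
  have hWh : ∀ k, 0 < What k := fun k => hB'.trans_le (hWhB k).1
  have hB : 0 < B := (hW k₀).trans_le (hWB k₀).2
  have hlow : m * min lamlow lammin / B ≤ ∑ k, lam k * ω k z / W k :=
    mul_div_le_sum_mul_div hc.le (fun k => (min_le_right _ _).trans (hlmin k))
      (hωnn · z) hW (fun k => (hWB k).2) hm.le hk₀
  have hlowhat : m * min lamlow lammin / B ≤ ∑ k, lamhat k * ω k z / What k :=
    mul_div_le_sum_mul_div hc.le (fun k => (min_le_left _ _).trans (hlhat k))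
      (hωnn · z) hWh (fun k => (hWhB k).2) hm.le hk₀
  have hdiff := abs_sum_mul_div_sub_sum_mul_div_le hB' (fun k => (hWB k).1) (fun k => (hWhB k).1)
    (fun k => hlammin.le.trans (hlmin k)) (hωnn · z) (hMup · z) hfluct
  rw [Fintype.card_fin] at hdiff
  calc _ ≤ _ / (m * min lamlow lammin / B) ^ 2 :=
        abs_inv_sub_inv_le_of_le (by positivity) hlowhat hlow
    _ ≤ _ / (m * min lamlow lammin / B) ^ 2 := div_le_div_of_nonneg_right hdiff (by positivity)
    _ = _ := by rw [div_eq_mul_inv, ← inv_pow, inv_div]; ring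

/-- Deterministic pointwise stability bound for the reciprocal debiasing weights. -/
theorem pointwise_weight_stability
    {q : ℕ} {Zs : Set (EuclideanSpace ℝ (Fin q))} (hZs : MeasurableSet Zs)
    {K : ℕ} (hK : 0 < K)
    (ω : Fin K → ↥Zs → ℝ) (hωnn : ∀ k z, 0 ≤ ω k z)
    (m M : ℝ) (hm : 0 < m) (hmlow : ∀ z, ∃ k, m ≤ ω k z) (hMup : ∀ k z, ω k z ≤ M)
    (n : ℕ) (hn : 0 < n) (C lamlow lammin : ℝ) (hC : 0 ≤ C)
    (hlamlow : 0 < lamlow) (hlammin : 0 < lammin)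
    (lam lamhat : Fin K → ℝ)
    (hlam : ∀ k, lam k ∈ Set.Ioo (0:ℝ) 1) (hlamsum : ∑ k, lam k = 1)
    (hlamhat : ∀ k, lamhat k ∈ Set.Ioo (0:ℝ) 1) (hlamhatsum : ∑ k, lamhat k = 1)
    (hlmin : ∀ k, lammin ≤ lam k) (hlhat : ∀ k, lamlow ≤ lamhat k)
    (hfluct : ∀ k, |lamhat k - lam k| ≤ C / Real.sqrt n)
    (B B' : ℝ) (hB' : 0 < B') (hB'B : B' ≤ B)
    (W What : Fin K → ℝ)
    (hWB : ∀ k, W k ∈ Set.Icc B' B) (hWhB : ∀ k, What k ∈ Set.Icc B' B) :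
    ∀ z : ↥Zs,
      |(∑ k, lamhat k * ω k z / What k)⁻¹ - (∑ k, lam k * ω k z / W k)⁻¹| ≤
        M * (B / (m * min lamlow lammin)) ^ 2 *
          ((K : ℝ) * C / (B' * Real.sqrt n) +
            (1 / B' ^ 2) * ∑ k, lam k * |What k - W k|) :=
  pointwise_weight_stability_general ω hωnn m M hm hmlow hMup n C lamlow lammin hlamlow hlammin lam
    lamhat hlmin hlhat hfluct B B' hB' W What hWB hWhB

end SelBias
end
end
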